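/- arXiv:2603.10432 — 2 statements merged into one kernel-verified Lean document; each statement's English description precedes it below -/
import Mathlib

section
/- The layering tree of a connected graph G with respect to a root s is a tree: the graph on parts, with parts adjacent iff they contain G-adjacent vertices, is connected and acyclic. -/
/-- `ReachWithin G S u v`: there is a `u`-`v` walk in `G` all of whose vertices lie in `S`. -/
def ReachWithin {V : Type*} (G : SimpleGraph V) (S : Set V) (u v : V) : Prop :=
  ∃ p : G.Walk u v, ∀ x ∈ p.support, x ∈ S

/-- The part at layer `k` containing `u`. -/
def LayerPart {V : Type*} (G : SimpleGraph V) (s : V) (k : ℕ) (u : V) : Set V :=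
  {v | G.dist s v = k ∧ ReachWithin G {x | k ≤ G.dist s x} u v}

/-- `P` is a part of the BFS layering of `G` from `s` (at some layer). -/
def IsPart {V : Type*} (G : SimpleGraph V) (s : V) (P : Set V) : Prop :=
  ∃ (k : ℕ) (u : V), G.dist s u = k ∧ P = LayerPart G s k u

/-- The layering tree of `G` with respect to `s`: the graph whose vertices are the parts,
with two distinct parts adjacent iff they contain vertices adjacent in `G`. -/
def layeringTree {V : Type*} (G : SimpleGraph V) (s : V) :
    SimpleGraph {P : Set V // IsPart G s P} where
  Adj P Q := P ≠ Q ∧ ∃ a ∈ P.1, ∃ b ∈ Q.1, G.Adj a b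
  symm := by
    constructor
    rintro P Q ⟨hne, a, ha, b, hb, hab⟩
    exact ⟨hne.symm, b, hb, a, ha, hab.symm⟩
  loopless := by
    constructor
    rintro P ⟨hne, -⟩
    exact hne rfl

namespace LayeringAux

open SimpleGraph

variable {V : Type*} {G : SimpleGraph V} {S : Set V} {s u v w : V}

lemma rw_refl (h : u ∈ S) : ReachWithin G S u u :=
  ⟨.nil, by simpa using h⟩

lemma rw_symm (h : ReachWithin G S u v) : ReachWithin G S v u := by
  obtain ⟨p, hp⟩ := h
  exact ⟨p.reverse, fun x hx => hp x (by simpa [Walk.support_reverse] using hx)⟩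

lemma rw_trans (h : ReachWithin G S u v) (h' : ReachWithin G S v w) :
    ReachWithin G S u w := by
  obtain ⟨p, hp⟩ := h; obtain ⟨q, hq⟩ := h'
  refine ⟨p.append q, fun x hx => ?_⟩
  rcases (Walk.mem_support_append_iff _ _).1 hx with hx | hx
  exacts [hp x hx, hq x hx]

lemma rw_adj (h : G.Adj u v) (hu : u ∈ S) (hv : v ∈ S) : ReachWithin G S u v :=
  ⟨.cons h .nil, by simp [hu, hv]⟩

lemma rw_mono {S' : Set V} (hS : S ⊆ S') (h : ReachWithin G S u v) :
    ReachWithin G S' u v := by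
  obtain ⟨p, hp⟩ := h
  exact ⟨p, fun x hx => hS (hp x hx)⟩

lemma layerPart_eq {k : ℕ} (h : ReachWithin G {x | k ≤ G.dist s x} u v) :
    LayerPart G s k u = LayerPart G s k v := by
  ext w
  simp only [LayerPart, Set.mem_setOf_eq]
  exact and_congr_right fun _ => ⟨fun hw => rw_trans (rw_symm h) hw, fun hw => rw_trans h hw⟩

lemma mem_self {k : ℕ} (h : G.dist s u = k) : u ∈ LayerPart G s k u :=
  ⟨h, rw_refl (by simp [h])⟩

/-- The level (layer index) of a part. -/
noncomputable def lvl (P : {P : Set V // IsPart G s P}) : ℕ := P.2.choose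

lemma exists_rep (P : {P : Set V // IsPart G s P}) :
    ∃ u, G.dist s u = lvl P ∧ P.1 = LayerPart G s (lvl P) u := P.2.choose_spec

lemma dist_of_mem {P : {P : Set V // IsPart G s P}} (h : v ∈ P.1) :
    G.dist s v = lvl P := by
  obtain ⟨u, hu, hP⟩ := exists_rep P
  rw [hP] at h
  exact h.1

lemma part_eq {P : {P : Set V // IsPart G s P}} (h : v ∈ P.1) :
    P.1 = LayerPart G s (lvl P) v := by
  obtain ⟨u, hu, hP⟩ := exists_rep P
  rw [hP] at h ⊢
  exact layerPart_eq h.2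

lemma part_nonempty (P : {P : Set V // IsPart G s P}) : ∃ v, v ∈ P.1 := by
  obtain ⟨u, hu, hP⟩ := exists_rep P
  exact ⟨u, hP ▸ mem_self hu⟩

lemma adj_lvl (hconn : G.Connected) {P Q : {P : Set V // IsPart G s P}}
    (h : (layeringTree G s).Adj P Q) :
    lvl Q + 1 = lvl P ∨ lvl P + 1 = lvl Q := by
  obtain ⟨hne, a, ha, b, hb, hab⟩ := h
  have hda : G.dist s a = lvl P := dist_of_mem ha
  have hdb : G.dist s b = lvl Q := dist_of_mem hb
  have hab1 : G.dist a b ≤ 1 := by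
    have := dist_le (Walk.cons hab Walk.nil)
    simpa using this
  have hba1 : G.dist b a ≤ 1 := by
    have := dist_le (Walk.cons hab.symm Walk.nil)
    simpa using this
  have h1 : G.dist s b ≤ G.dist s a + 1 :=
    (hconn.dist_triangle (v := a)).trans (by omega)
  have h2 : G.dist s a ≤ G.dist s b + 1 :=
    (hconn.dist_triangle (v := b)).trans (by omega)
  by_cases heq : lvl P = lvl Q
  · exfalso
    apply hne
    apply Subtype.ext
    have hr : ReachWithin G {x | lvl P ≤ G.dist s x} a b :=
      rw_adj hab (by simp [hda]) (by simp [hdb, heq])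
    have e1 : P.1 = LayerPart G s (lvl P) a := part_eq ha
    have e2 : Q.1 = LayerPart G s (lvl P) b := by
      have := part_eq hb
      rwa [← heq] at this
    rw [e1, e2]
    exact layerPart_eq hr
  · omega

lemma parent_unique (hconn : G.Connected) {P Q Q' : {P : Set V // IsPart G s P}}
    (hQ : (layeringTree G s).Adj P Q) (hQ' : (layeringTree G s).Adj P Q')
    (h1 : lvl Q + 1 = lvl P) (h2 : lvl Q' + 1 = lvl P) : Q = Q' := by
  obtain ⟨-, a, ha, b, hb, hab⟩ := hQ
  obtain ⟨-, a', ha', b', hb', hab'⟩ := hQ'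
  have hda : G.dist s a = lvl P := dist_of_mem ha
  have hda' : G.dist s a' = lvl P := dist_of_mem ha'
  have hdb : G.dist s b = lvl Q := dist_of_mem hb
  have hdb' : G.dist s b' = lvl Q' := dist_of_mem hb'
  set m := lvl Q with hm
  have hQ'm : lvl Q' = m := by omega
  -- a and a' are connected within distance ≥ lvl P
  have haa' : ReachWithin G {x | lvl P ≤ G.dist s x} a a' := by
    have e1 := part_eq ha
    have := ha'
    rw [e1] at this
    exact this.2
  have hsub : {x | lvl P ≤ G.dist s x} ⊆ {x | m ≤ G.dist s x} := by
    intro x hx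
    simp only [Set.mem_setOf_eq] at hx ⊢
    omega
  have hbb' : ReachWithin G {x | m ≤ G.dist s x} b b' := by
    refine rw_trans (rw_adj hab.symm ?_ ?_) (rw_trans (rw_mono hsub haa') (rw_adj hab' ?_ ?_))
    · simp only [Set.mem_setOf_eq]; omega
    · simp only [Set.mem_setOf_eq]; omega
    · simp only [Set.mem_setOf_eq]; omega
    · simp only [Set.mem_setOf_eq]; omega
  apply Subtype.ext
  have e1 : Q.1 = LayerPart G s m b := part_eq hb
  have e2 : Q'.1 = LayerPart G s m b' := by
    have := part_eq hb'
    rwa [hQ'm] at this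
  rw [e1, e2]
  exact layerPart_eq hbb'

lemma parent_exists (hconn : G.Connected) {P : {P : Set V // IsPart G s P}} {k : ℕ}
    (hk : lvl P = k + 1) :
    ∃ Q, (layeringTree G s).Adj P Q ∧ lvl Q = k := by
  obtain ⟨u, hu, hP⟩ := exists_rep P
  have hu' : G.dist s u = k + 1 := by rw [hu, hk]
  have hne : u ≠ s := by
    intro h; rw [h, dist_self] at hu'; omega
  obtain ⟨p, hp⟩ := (hconn.preconnected s u).exists_walk_length_eq_dist
  obtain ⟨w, hA, q, hq⟩ := Walk.exists_eq_cons_of_ne hne p.reverse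
  have hqlen : q.length = k := by
    have : p.reverse.length = k + 1 := by rw [Walk.length_reverse, hp, hu']
    rw [hq] at this
    simpa using this
  have hdw : G.dist s w = k := by
    have hle : G.dist s w ≤ k := by
      have := dist_le q.reverse
      rwa [Walk.length_reverse, hqlen] at this
    have hge : k + 1 ≤ G.dist s w + 1 := by
      have htr : G.dist s u ≤ G.dist s w + G.dist w u := hconn.dist_triangle
      have hwu : G.dist w u ≤ 1 := by
        have := dist_le (Walk.cons hA.symm Walk.nil)
        simpa using this
      omega
    omega
  refine ⟨⟨LayerPart G s k w, ⟨k, w, hdw, rfl⟩⟩, ⟨?_, u, hP ▸ mem_self hu, w, mem_self hdw, hA⟩, ?_⟩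
  · intro heq
    have h2 : u ∈ P.1 := hP ▸ mem_self hu
    rw [heq] at h2
    have h3 : G.dist s u = k := h2.1
    omega
  · have : w ∈ (⟨LayerPart G s k w, ⟨k, w, hdw, rfl⟩⟩ : {P : Set V // IsPart G s P}).1 :=
      mem_self hdw
    have := dist_of_mem this
    omega

lemma lvl_zero_eq (hconn : G.Connected) {P : {P : Set V // IsPart G s P}}
    (h : lvl P = 0) : P.1 = LayerPart G s 0 s := by
  obtain ⟨v, hv⟩ := part_nonempty P
  have hd : G.dist s v = 0 := by rw [dist_of_mem hv, h]
  have hvs : v = s := (hconn.dist_eq_zero_iff.mp hd).symm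
  have := part_eq hv
  rw [h, hvs] at this
  exact this

lemma reach_root (hconn : G.Connected) (R : {P : Set V // IsPart G s P})
    (hR : R.1 = LayerPart G s 0 s) :
    ∀ (n : ℕ) (P : {P : Set V // IsPart G s P}), lvl P = n →
      (layeringTree G s).Reachable R P := by
  intro n
  induction n with
  | zero =>
    intro P hP
    have : P = R := Subtype.ext ((lvl_zero_eq hconn hP).trans hR.symm)
    rw [this]
  | succ k ih =>
    intro P hP
    obtain ⟨Q, hadj, hQ⟩ := parent_exists hconn hP
    exact (ih Q hQ).trans hadj.symm.reachable

lemma no_max_cycle (hconn : G.Connected) {P : {P : Set V // IsPart G s P}}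
    (c : (layeringTree G s).Walk P P) (hc : c.IsCycle)
    (hmax : ∀ x ∈ c.support, lvl x ≤ lvl P) : False := by
  cases c with
  | nil => simpa using hc.three_le_length
  | @cons _ x _ h q =>
    rw [Walk.cons_isCycle_iff] at hc
    obtain ⟨hq, he⟩ := hc
    have hxP : x ≠ P := h.ne'
    obtain ⟨y, h', q', hq'⟩ := Walk.exists_eq_cons_of_ne h.ne q.reverse
    have hyq : s(P, y) ∈ q.edges := by
      have : s(P, y) ∈ q.reverse.edges := by
        rw [hq']
        simp
      rwa [Walk.edges_reverse, List.mem_reverse] at this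
    have hxs : x ∈ (Walk.cons h q).support := by simp
    have hys : y ∈ (Walk.cons h q).support := by
      have : y ∈ q.reverse.support := by rw [hq']; simp
      rw [Walk.support_reverse, List.mem_reverse] at this
      simp [this]
    have hx1 : lvl x + 1 = lvl P := by
      rcases adj_lvl hconn h with h1 | h1
      · exact h1
      · have := hmax x hxs; omega
    have hy1 : lvl y + 1 = lvl P := by
      rcases adj_lvl hconn h' with h1 | h1
      · exact h1
      · have := hmax y hys; omega
    have : x = y := parent_unique hconn h h' hx1 hy1
    rw [← this] at hyq
    exact he hyq

end LayeringAux

/-- The layering tree of a connected graph is a tree: it is connected and acyclic. -/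
theorem layeringTree_is_tree {V : Type*} (G : SimpleGraph V) (hconn : G.Connected)
    (s : V) :
    (layeringTree G s).Connected ∧ (layeringTree G s).IsAcyclic := by
  classical
  open LayeringAux SimpleGraph in
  have hds : G.dist s s = 0 := SimpleGraph.dist_self
  have hR : IsPart G s (LayerPart G s 0 s) := ⟨0, s, hds, rfl⟩
  set R : {P : Set V // IsPart G s P} := ⟨LayerPart G s 0 s, hR⟩ with hRdef
  constructor
  · have : Nonempty {P : Set V // IsPart G s P} := ⟨R⟩
    refine SimpleGraph.Connected.mk fun P Q => ?_
    exact (LayeringAux.reach_root hconn R rfl (LayeringAux.lvl P) P rfl).symm.trans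
      (LayeringAux.reach_root hconn R rfl (LayeringAux.lvl Q) Q rfl)
  · intro P c hc
    obtain ⟨P₀, hP₀f, hmax⟩ := Finset.exists_max_image c.support.toFinset LayeringAux.lvl
      ⟨P, List.mem_toFinset.mpr c.start_mem_support⟩
    have hP₀ : P₀ ∈ c.support := List.mem_toFinset.mp hP₀f
    refine LayeringAux.no_max_cycle hconn (c.rotate P₀ hP₀) (hc.rotate hP₀) ?_
    intro x hx
    have hxc : x ∈ c.support := by
      rw [SimpleGraph.Walk.support_eq_cons, List.mem_cons] at hx
      rcases hx with hx | hx
      · exact hx ▸ hP₀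
      · have : x ∈ c.support.tail :=
          ((SimpleGraph.Walk.support_rotate c P₀ hP₀).perm.mem_iff).mp hx
        exact List.mem_of_mem_tail this
    exact hmax x (List.mem_toFinset.mpr hxc)
end

section
/- Let G be a connected graph with layering tree 𝒯 from root s. For every part P' at layer k ≥ 1, P' has exactly one neighbor in 𝒯 among parts at layer k − 1 (its parent); all other neighbors of P' in 𝒯 are parts at layer k + 1. -/
/-- `P` is a part at layer `k` of the BFS layering of `G` from `s`. -/
def IsPartAt {V : Type*} (G : SimpleGraph V) (s : V) (k : ℕ) (P : Set V) : Prop :=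
  ∃ u : V, G.dist s u = k ∧ P = LayerPart G s k u

/-- Adjacency of parts in the layering tree: distinct parts containing `G`-adjacent
vertices. -/
def PartAdj {V : Type*} (G : SimpleGraph V) (P Q : Set V) : Prop :=
  P ≠ Q ∧ ∃ a ∈ P, ∃ b ∈ Q, G.Adj a b

section

open SimpleGraph

variable {V : Type*} {G : SimpleGraph V} {S T : Set V} {s u v w a b a' b' : V} {j k : ℕ}

namespace ReachWithin

lemma refl (hu : u ∈ S) : ReachWithin G S u u :=
  ⟨Walk.nil, by simpa using hu⟩

lemma symm (h : ReachWithin G S u v) : ReachWithin G S v u := by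
  obtain ⟨p, hp⟩ := h
  exact ⟨p.reverse, fun x hx => hp x (by simpa using hx)⟩

lemma trans (h₁ : ReachWithin G S u v) (h₂ : ReachWithin G S v w) : ReachWithin G S u w := by
  obtain ⟨p, hp⟩ := h₁
  obtain ⟨q, hq⟩ := h₂
  refine ⟨p.append q, fun x hx => ?_⟩
  rcases (Walk.mem_support_append_iff p q).1 hx with hx | hx
  exacts [hp x hx, hq x hx]

lemma mono (hST : S ⊆ T) (h : ReachWithin G S u v) : ReachWithin G T u v := by
  obtain ⟨p, hp⟩ := h
  exact ⟨p, fun x hx => hST (hp x hx)⟩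

lemma of_adj (hu : u ∈ S) (hv : v ∈ S) (huv : G.Adj u v) : ReachWithin G S u v :=
  ⟨.cons huv .nil, by simp [hu, hv]⟩

end ReachWithin

lemma exists_adj_dist_eq_sub_one (hr : G.Reachable s u) (hu : 0 < G.dist s u) :
    ∃ a, G.Adj a u ∧ G.dist s a = G.dist s u - 1 := by
  obtain ⟨p, hp⟩ := hr.exists_walk_length_eq_dist
  have hnil : ¬p.Nil := Walk.not_nil_iff_lt_length.2 (hp ▸ hu)
  refine ⟨p.penultimate, Walk.adj_penultimate hnil, ?_⟩
  have hle : G.dist s p.penultimate ≤ p.length - 1 := Walk.length_dropLast p ▸ dist_le _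
  have := (Walk.adj_penultimate hnil).diff_dist_adj (u := s)
  omega

lemma mem_layerPart_self (hu : G.dist s u = k) : u ∈ LayerPart G s k u :=
  ⟨hu, .refl (by simp [hu])⟩

lemma layerPart_eq_of_reachWithin (h : ReachWithin G {x | k ≤ G.dist s x} u w) :
    LayerPart G s k u = LayerPart G s k w := by
  ext v
  exact ⟨fun hv => ⟨hv.1, h.symm.trans hv.2⟩, fun hv => ⟨hv.1, h.trans hv.2⟩⟩

lemma layerPart_eq_of_mem (hv : v ∈ LayerPart G s k u) : LayerPart G s k v = LayerPart G s k u :=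
  layerPart_eq_of_reachWithin hv.2.symm

lemma layerPart_ne_of_ne (hu : G.dist s u = k) (hjk : j ≠ k) :
    LayerPart G s k u ≠ LayerPart G s j w := by
  intro h
  have := (h ▸ mem_layerPart_self hu).1
  omega

lemma layerPart_eq_of_adj (ha : a ∈ LayerPart G s k u) (hb : b ∈ LayerPart G s k w)
    (hab : G.Adj a b) : LayerPart G s k u = LayerPart G s k w :=
  layerPart_eq_of_reachWithin <|
    ha.2.trans <| (ReachWithin.of_adj (by simp [ha.1]) (by simp [hb.1]) hab).trans hb.2.symm

lemma layerPart_eq_of_adj_layerPart (hjk : j ≤ k) (ha : a ∈ LayerPart G s k u)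
    (ha' : a' ∈ LayerPart G s k u) (hab : G.Adj a b) (ha'b' : G.Adj a' b')
    (hb : G.dist s b = j) (hb' : G.dist s b' = j) :
    LayerPart G s j b = LayerPart G s j b' := by
  have hlayer : {x | k ≤ G.dist s x} ⊆ {x | j ≤ G.dist s x} := fun x hx => hjk.trans hx
  exact layerPart_eq_of_reachWithin <|
    (ReachWithin.of_adj (by simp [hb]) (by simp [ha.1, hjk]) hab.symm).trans <|
    (ReachWithin.mono hlayer (ha.2.symm.trans ha'.2)).trans <|
    ReachWithin.of_adj (by simp [ha'.1, hjk]) (by simp [hb']) ha'b'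

end

/-- Every part `P` at layer `k ≥ 1` has exactly one neighbor in the layering tree among
parts at layer `k - 1` (its parent), and every other neighbor of `P` is a part at layer
`k + 1`. -/
theorem layeringTree_unique_parent {V : Type*} (G : SimpleGraph V) (hconn : G.Connected)
    (s : V) (k : ℕ) (hk : 1 ≤ k) (P : Set V) (hP : IsPartAt G s k P) :
    (∃! Q : Set V, IsPartAt G s (k - 1) Q ∧ PartAdj G P Q) ∧
    (∀ (m : ℕ) (Q : Set V), IsPartAt G s m Q → PartAdj G P Q →
      m = k - 1 ∨ m = k + 1) := by
  obtain ⟨u, hu, rfl⟩ := hP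
  obtain ⟨a₀, ha₀u, ha₀⟩ := exists_adj_dist_eq_sub_one (hconn.preconnected s u) (by omega)
  rw [hu] at ha₀
  refine ⟨⟨LayerPart G s (k - 1) a₀, ⟨⟨a₀, ha₀, rfl⟩, layerPart_ne_of_ne hu (by omega),
    u, mem_layerPart_self hu, a₀, mem_layerPart_self ha₀, ha₀u.symm⟩, ?_⟩, ?_⟩
  · rintro Q ⟨⟨w, -, rfl⟩, -, a, ha, b, hb, hab⟩
    rw [← layerPart_eq_of_mem hb]
    exact layerPart_eq_of_adj_layerPart (Nat.sub_le k 1) ha (mem_layerPart_self hu) hab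
      ha₀u.symm hb.1 ha₀
  · rintro m Q ⟨w, -, rfl⟩ ⟨hne, a, ha, b, hb, hab⟩
    have hmk : m ≠ k := by
      rintro rfl
      exact hne (layerPart_eq_of_adj ha hb hab)
    have := hab.diff_dist_adj (u := s)
    rw [ha.1, hb.1] at this
    omega
end
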